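/- Let m̲ ≥ 1 be an integer with N ≥ m̲ almost surely, and let a̲ > 0 be a constant such that (A_k)_{ij} ≥ a̲ almost surely for all i, j ∈ {1,…,p} and all 1 ≤ k ≤ m̲. Then for every t ∈ [0,∞)^p and every integer k ≥ 1: φ(t) ≤ [φ(a̲^k p^{k−1} ‖t‖ e)]^{m̲^k}, where e = (1,1,…,1) ∈ ℝ^p. In particular (k = 1), φ(t) ≤ [φ(a̲ ‖t‖ e)]^{m̲}. -/

import Mathlib

/-!
Since `Z ≥ 0`, the Laplace transform `φ` takes values in `[0, 1]` on `[0,∞)^p` and is antitone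
there. In the functional equation, drop the factors with `k > m̲` (each is at most `1`) and bound
each remaining factor using `t A_k ≥ a̲ ‖t‖ e` coordinatewise; this gives `φ(t) ≤ φ(a̲ ‖t‖ e)^m̲`.
Iterating this at the constant vector `a̲ ‖t‖ e`, whose norm is `p a̲ ‖t‖`, gives the `k`-fold
bound.
-/

open MeasureTheory ProbabilityTheory Filter Finset Matrix

noncomputable section

variable {Ω ι : Type*} [MeasurableSpace Ω] [Fintype ι]

def laplaceTransform (μ : Measure Ω) (Z : Ω → ι → ℝ) (t : ι → ℝ) : ℝ :=
  ∫ ω, Real.exp (-(∑ j, t j * Z ω j)) ∂μ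

namespace laplaceTransform

variable {μ : Measure Ω} {Z : Ω → ι → ℝ}

theorem nonneg (t : ι → ℝ) : 0 ≤ laplaceTransform μ Z t :=
  integral_nonneg fun _ => (Real.exp_pos _).le

theorem exp_neg_sum_mul_le_one {t z : ι → ℝ} (ht : 0 ≤ t) (hz : 0 ≤ z) :
    Real.exp (-(∑ j, t j * z j)) ≤ 1 :=
  Real.exp_le_one_iff.2 <| neg_nonpos.2 <| sum_nonneg fun j _ => mul_nonneg (ht j) (hz j)

theorem integrable_exp [IsFiniteMeasure μ] (hZm : Measurable Z) (hZ : ∀ᵐ ω ∂μ, 0 ≤ Z ω)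
    {t : ι → ℝ} (ht : 0 ≤ t) : Integrable (fun ω => Real.exp (-(∑ j, t j * Z ω j))) μ := by
  refine (integrable_const (1 : ℝ)).mono' (by fun_prop) ?_
  filter_upwards [hZ] with ω hω
  rw [Real.norm_of_nonneg (Real.exp_pos _).le]
  exact exp_neg_sum_mul_le_one ht hω

theorem le_one [IsProbabilityMeasure μ] (hZ : ∀ᵐ ω ∂μ, 0 ≤ Z ω) {t : ι → ℝ} (ht : 0 ≤ t) :
    laplaceTransform μ Z t ≤ 1 := by
  calc laplaceTransform μ Z t ≤ ∫ _, (1 : ℝ) ∂μ :=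
        integral_mono_of_nonneg (.of_forall fun _ => (Real.exp_pos _).le) (integrable_const _)
          (hZ.mono fun _ hω => exp_neg_sum_mul_le_one ht hω)
    _ = 1 := by simp

theorem antitoneOn [IsFiniteMeasure μ] (hZm : Measurable Z) (hZ : ∀ᵐ ω ∂μ, 0 ≤ Z ω) :
    AntitoneOn (laplaceTransform μ Z) (Set.Ici 0) := by
  intro s hs t _ hst
  refine integral_mono_of_nonneg (.of_forall fun _ => (Real.exp_pos _).le)
    (integrable_exp hZm hZ hs) ?_
  filter_upwards [hZ] with ω hω
  gcongr with j
  exacts [hω j, hst j]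

end laplaceTransform

theorem const_mul_sum_le_vecMul {a : ℝ} {t : ι → ℝ} {M : Matrix ι ι ℝ} (ht : 0 ≤ t)
    (haM : ∀ i j, a ≤ M i j) : (fun _ => a * ∑ i, t i) ≤ t ᵥ* M := fun j => by
  rw [vecMul_apply_eq_sum, mul_sum]
  exact sum_le_sum fun i _ => by rw [mul_comm]; exact mul_le_mul_of_nonneg_left (haM i j) (ht i)

section FixedPoint

variable {φ : (ι → ℝ) → ℝ} {a : ℝ} {m : ℕ}

theorem prod_le_pow_of_le_entries (h0 : ∀ t, 0 ≤ φ t) (h1 : ∀ t, 0 ≤ t → φ t ≤ 1)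
    (hanti : AntitoneOn φ (Set.Ici 0)) {n : ℕ} (hmn : m ≤ n) {A : ℕ → Matrix ι ι ℝ}
    (hA : ∀ k i j, 0 ≤ A k i j) (ha : 0 ≤ a) (haA : ∀ k, 1 ≤ k → k ≤ m → ∀ i j, a ≤ A k i j)
    {t : ι → ℝ} (ht : 0 ≤ t) :
    ∏ k ∈ Icc 1 n, φ (t ᵥ* A k) ≤ φ (fun _ => a * ∑ i, t i) ^ m := by
  have htA : ∀ k, 0 ≤ t ᵥ* A k := fun k j => sum_nonneg fun i _ => mul_nonneg (ht i) (hA k i j)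
  have hc : (0 : ι → ℝ) ≤ fun _ => a * ∑ i, t i :=
    fun _ => mul_nonneg ha (sum_nonneg fun i _ => ht i)
  calc ∏ k ∈ Icc 1 n, φ (t ᵥ* A k) ≤ ∏ k ∈ Icc 1 m, φ (t ᵥ* A k) :=
        prod_le_prod_of_subset_of_le_one (Icc_subset_Icc le_rfl hmn) (fun _ _ => h0 _)
          fun k _ _ => h1 _ (htA k)
    _ ≤ ∏ _k ∈ Icc 1 m, φ (fun _ => a * ∑ i, t i) := by
        refine prod_le_prod (fun _ _ => h0 _) fun k hk => ?_
        obtain ⟨hk1, hkm⟩ := mem_Icc.1 hk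
        exact hanti hc (htA k) (const_mul_sum_le_vecMul ht (haA k hk1 hkm))
    _ = φ (fun _ => a * ∑ i, t i) ^ m := by simp

theorem le_pow_of_eq_integral_prod {μ : Measure Ω} [IsProbabilityMeasure μ]
    (h0 : ∀ t, 0 ≤ φ t) (h1 : ∀ t, 0 ≤ t → φ t ≤ 1) (hanti : AntitoneOn φ (Set.Ici 0))
    {N : Ω → ℕ} {A : ℕ → Ω → Matrix ι ι ℝ} (hA : ∀ k ω i j, 0 ≤ A k ω i j)
    {t : ι → ℝ} (ht : 0 ≤ t)
    (hfe : φ t = ∫ ω, ∏ k ∈ Icc 1 (N ω), φ (t ᵥ* A k ω) ∂μ)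
    (hNm : ∀ᵐ ω ∂μ, m ≤ N ω) (ha : 0 ≤ a)
    (hAa : ∀ᵐ ω ∂μ, ∀ k, 1 ≤ k → k ≤ m → ∀ i j, a ≤ A k ω i j) :
    φ t ≤ φ (fun _ => a * ∑ i, t i) ^ m := by
  rw [hfe]
  calc ∫ ω, ∏ k ∈ Icc 1 (N ω), φ (t ᵥ* A k ω) ∂μ ≤ ∫ _, φ (fun _ => a * ∑ i, t i) ^ m ∂μ :=
        integral_mono_of_nonneg (.of_forall fun _ => prod_nonneg fun _ _ => h0 _)
          (integrable_const _) <| by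
            filter_upwards [hNm, hAa] with ω hNω hAω
            exact prod_le_pow_of_le_entries h0 h1 hanti hNω (hA · ω) ha hAω ht
    _ = φ (fun _ => a * ∑ i, t i) ^ m := by simp

theorem le_pow_pow_of_le_pow (h0 : ∀ t, 0 ≤ φ t)
    (hstep : ∀ t, 0 ≤ t → φ t ≤ φ (fun _ => a * ∑ i, t i) ^ m) (ha : 0 ≤ a) (k : ℕ) :
    ∀ t, 0 ≤ t →
      φ t ≤ φ (fun _ => a ^ (k + 1) * (Fintype.card ι : ℝ) ^ k * ∑ i, t i) ^ m ^ (k + 1) := by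
  induction k with
  | zero => simpa using hstep
  | succ k ih =>
    intro t ht
    have hs : (0 : ι → ℝ) ≤ fun _ => a * ∑ i, t i :=
      fun _ => mul_nonneg ha (sum_nonneg fun i _ => ht i)
    have hsum : a ^ (k + 1) * (Fintype.card ι : ℝ) ^ k * ∑ _i : ι, a * ∑ i, t i
        = a ^ (k + 2) * (Fintype.card ι : ℝ) ^ (k + 1) * ∑ i, t i := by
      rw [sum_const, card_univ, nsmul_eq_mul]
      ring
    calc φ t ≤ φ (fun _ => a * ∑ i, t i) ^ m := hstep t ht
      _ ≤ (φ (fun _ => a ^ (k + 2) * (Fintype.card ι : ℝ) ^ (k + 1) * ∑ i, t i) ^ m ^ (k + 1))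
            ^ m := by
          rw [← hsum]
          exact pow_le_pow_left₀ (h0 _) (ih _ hs) m
      _ = φ (fun _ => a ^ (k + 2) * (Fintype.card ι : ℝ) ^ (k + 1) * ∑ i, t i) ^ m ^ (k + 2) := by
          rw [← pow_mul, ← pow_succ]

end FixedPoint

end

theorem laplace_iteration_inequality_general
    {Ω : Type*} [MeasurableSpace Ω] (μ : Measure Ω) [IsProbabilityMeasure μ]
    {p : ℕ}
    (N : Ω → ℕ)
    (A : ℕ → Ω → Fin p → Fin p → ℝ) (hApos : ∀ k ω i j, 0 ≤ A k ω i j)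
    (Z : Ω → Fin p → ℝ) (hZmeas : Measurable Z)
    (hZpos : ∀ᵐ ω ∂μ, ∀ j, 0 < Z ω j)
    (φ : (Fin p → ℝ) → ℝ)
    (hφ : ∀ t : Fin p → ℝ, φ t = ∫ ω, Real.exp (-(∑ j, t j * Z ω j)) ∂μ)
    (hfe : ∀ t : Fin p → ℝ, (∀ j, 0 ≤ t j) →
      φ t = ∫ ω, ∏ k ∈ Finset.Icc 1 (N ω), φ (fun j => ∑ i, t i * A k ω i j) ∂μ)
    (m : ℕ) (hNm : ∀ᵐ ω ∂μ, m ≤ N ω)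
    (a : ℝ) (ha : 0 < a)
    (hAa : ∀ᵐ ω ∂μ, ∀ k, 1 ≤ k → k ≤ m → ∀ i j, a ≤ A k ω i j) :
    (∀ t : Fin p → ℝ, (∀ j, 0 ≤ t j) → ∀ k : ℕ, 1 ≤ k →
      φ t ≤ (φ (fun _ => a ^ k * (p : ℝ) ^ (k - 1) * ∑ j, t j)) ^ (m ^ k)) ∧
    (∀ t : Fin p → ℝ, (∀ j, 0 ≤ t j) →
      φ t ≤ (φ (fun _ => a * ∑ j, t j)) ^ m) := by
  have hZ : ∀ᵐ ω ∂μ, 0 ≤ Z ω := hZpos.mono fun _ hω j => (hω j).le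
  obtain rfl : φ = laplaceTransform μ Z := funext hφ
  have hstep : ∀ t : Fin p → ℝ, 0 ≤ t →
      laplaceTransform μ Z t ≤ laplaceTransform μ Z (fun _ => a * ∑ j, t j) ^ m :=
    fun t ht => le_pow_of_eq_integral_prod laplaceTransform.nonneg
      (fun _ => laplaceTransform.le_one hZ) (laplaceTransform.antitoneOn hZmeas hZ) hApos ht
      (hfe t ht) hNm ha.le hAa
  refine ⟨fun t ht k hk => ?_, hstep⟩
  obtain ⟨k, rfl⟩ := Nat.exists_eq_add_of_le' hk
  simpa using le_pow_pow_of_le_pow laplaceTransform.nonneg hstep ha.le k t ht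

/-- **The iteration inequality (5.9).** Suppose `N ≥ m̲ ≥ 1` a.s. and
`(A_k)_{ij} ≥ a̲ > 0` a.s. for all `i,j` and `1 ≤ k ≤ m̲`.  Then for every `t ∈ [0,∞)^p`
and every integer `k ≥ 1`, `φ(t) ≤ [φ(a̲^k p^{k-1} ‖t‖ e)]^{m̲^k}` where `e = (1,…,1)`;
in particular (`k = 1`), `φ(t) ≤ [φ(a̲ ‖t‖ e)]^{m̲}`. -/
theorem laplace_iteration_inequality
    {Ω : Type*} [MeasurableSpace Ω] (μ : Measure Ω) [IsProbabilityMeasure μ]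
    {p : ℕ} (hp : 0 < p)
    (N : Ω → ℕ) (hN : ∀ ω, 1 ≤ N ω) (hNmeas : Measurable N)
    (A : ℕ → Ω → Fin p → Fin p → ℝ) (hApos : ∀ k ω i j, 0 ≤ A k ω i j)
    (hAmeas : ∀ k, Measurable (A k))
    (Z : Ω → Fin p → ℝ) (hZmeas : Measurable Z)
    (hZpos : ∀ᵐ ω ∂μ, ∀ j, 0 < Z ω j)
    (φ : (Fin p → ℝ) → ℝ)
    (hφ : ∀ t : Fin p → ℝ, φ t = ∫ ω, Real.exp (-(∑ j, t j * Z ω j)) ∂μ)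
    (hfe : ∀ t : Fin p → ℝ, (∀ j, 0 ≤ t j) →
      φ t = ∫ ω, ∏ k ∈ Finset.Icc 1 (N ω), φ (fun j => ∑ i, t i * A k ω i j) ∂μ)
    (m : ℕ) (hm : 1 ≤ m) (hNm : ∀ᵐ ω ∂μ, m ≤ N ω)
    (a : ℝ) (ha : 0 < a)
    (hAa : ∀ᵐ ω ∂μ, ∀ k, 1 ≤ k → k ≤ m → ∀ i j, a ≤ A k ω i j) :
    (∀ t : Fin p → ℝ, (∀ j, 0 ≤ t j) → ∀ k : ℕ, 1 ≤ k →
      φ t ≤ (φ (fun _ => a ^ k * (p : ℝ) ^ (k - 1) * ∑ j, t j)) ^ (m ^ k)) ∧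
    (∀ t : Fin p → ℝ, (∀ j, 0 ≤ t j) →
      φ t ≤ (φ (fun _ => a * ∑ j, t j)) ^ m) :=
  laplace_iteration_inequality_general μ N A hApos Z hZmeas hZpos φ hφ hfe m hNm a ha hAa
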